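/- arXiv:1302.3531 — 2 statements merged into one kernel-verified Lean document; each statement's English description precedes it below -/
import Mathlib

section
/- Fix e ∈ (0,1) and define f_-(e) = inf { (I₀(e+x) - x·I₀'(e) - I₀(e)) / x² : x ∈ [-e, 1-e], x ≠ 0 }. Then f_-(e) > 0, f_-(e) ≤ 1/(4e(1-e)), and every graphon g with edge density e(g) = e satisfies I(g) - I₀(e) ≥ f_-(e)·∫_{[0,1]²} (g(x,y) - e)² dx dy. -/
open MeasureTheory Set

/-- `I₀(u) = (1/2)[u ln u + (1-u) ln(1-u)]`; since `Real.log 0 = 0`,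
this automatically satisfies the continuous extension `I₀(0) = I₀(1) = 0`. -/
noncomputable def I0 (u : ℝ) : ℝ :=
  (1/2) * (u * Real.log u + (1 - u) * Real.log (1 - u))

/-- A graphon: a measurable function `[0,1]² → [0,1]`, symmetric on `[0,1]²`. -/
def IsGraphon (g : ℝ → ℝ → ℝ) : Prop :=
  Measurable (Function.uncurry g) ∧
  (∀ x ∈ Icc (0:ℝ) 1, ∀ y ∈ Icc (0:ℝ) 1, g x y = g y x) ∧
  (∀ x ∈ Icc (0:ℝ) 1, ∀ y ∈ Icc (0:ℝ) 1, g x y ∈ Icc (0:ℝ) 1)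

/-- Edge density `e(g) = ∫∫ g`. -/
noncomputable def edgeDensity (g : ℝ → ℝ → ℝ) : ℝ :=
  ∫ x in Icc (0:ℝ) 1, ∫ y in Icc (0:ℝ) 1, g x y

/-- Triangle density `t(g) = ∫∫∫ g(x,y) g(y,z) g(z,x)`. -/
noncomputable def triangleDensity (g : ℝ → ℝ → ℝ) : ℝ :=
  ∫ x in Icc (0:ℝ) 1, ∫ y in Icc (0:ℝ) 1, ∫ z in Icc (0:ℝ) 1,
    g x y * g y z * g z x

/-- Rate function `I(g) = ∫∫ I₀(g(x,y))`. -/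
noncomputable def rateFn (g : ℝ → ℝ → ℝ) : ℝ :=
  ∫ x in Icc (0:ℝ) 1, ∫ y in Icc (0:ℝ) 1, I0 (g x y)

/-- `I₀'(u) = (1/2) ln(u/(1-u))`. -/
noncomputable def I0' (u : ℝ) : ℝ := (1/2) * Real.log (u / (1 - u))

/-- `f₋(e) = inf { (I₀(e+x) - x I₀'(e) - I₀(e))/x² : x ∈ [-e, 1-e], x ≠ 0 }`. -/
noncomputable def fminus (e : ℝ) : ℝ :=
  sInf {r : ℝ | ∃ x : ℝ, x ∈ Icc (-e) (1 - e) ∧ x ≠ 0 ∧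
    r = (I0 (e + x) - x * I0' e - I0 e) / x ^ 2}

/-!
On `(0,1)` the function `I₀` has second derivative `1/(2u(1-u)) ≥ 2`, so `I₀ - u²` is convex and
`I₀` exceeds its tangent line at `e` by at least `(u - e)²` on `[0,1]`; hence `f₋(e) ≥ 1`. Near `e`
the second derivative is at most `I₀''(e) + 2ε`, and the same tangent argument applied to the
concave function `(I₀''(e)/2 + ε) u² - I₀` bounds the quotient at small `x > 0` by `I₀''(e)/2 + ε`.
For the integral inequality, `I₀(u) - I₀(e) - I₀'(e)(u - e) ≥ f₋(e)(u - e)²` holds pointwise on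
`[0,1]` by definition of `f₋`; integrate it against `(x, y) ↦ g x y` on `[0,1]²`, where the
linear term vanishes because `g` has mean `e`.
-/

lemma ConvexOn.add_mul_sub_le_of_hasDerivAt {S : Set ℝ} {f : ℝ → ℝ} {f' x y : ℝ}
    (hf : ConvexOn ℝ S f) (hx : x ∈ S) (hy : y ∈ S) (hd : HasDerivAt f f' x) :
    f x + f' * (y - x) ≤ f y := by
  rcases lt_trichotomy y x with hyx | rfl | hxy
  · have := hf.slope_le_of_hasDerivAt hy hx hyx hd
    rw [slope_def_field, div_le_iff₀ (sub_pos.2 hyx)] at this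
    linarith
  · simp
  · have := hf.le_slope_of_hasDerivAt hx hy hxy hd
    rw [slope_def_field, le_div_iff₀ (sub_pos.2 hxy)] at this
    linarith

section Taylor

variable {S : Set ℝ} {f f' f'' : ℝ → ℝ} {C x y : ℝ}

lemma mul_sq_le_sub_tangent_of_le_deriv2 (hS : Convex ℝ S) (hf : ContinuousOn f S)
    (hf' : ∀ t ∈ interior S, HasDerivAt f (f' t) t)
    (hf'' : ∀ t ∈ interior S, HasDerivAt f' (f'' t) t) (hC : ∀ t ∈ interior S, C ≤ f'' t)
    (hx : x ∈ interior S) (hy : y ∈ S) :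
    C / 2 * (y - x) ^ 2 ≤ f y - f x - f' x * (y - x) := by
  have hsq : ∀ t, HasDerivAt (fun t => C / 2 * t ^ 2) (C * t) t := fun t =>
    ((hasDerivAt_pow 2 t).const_mul (C / 2)).congr_deriv (by ring)
  have hconvex : ConvexOn ℝ S (fun t => f t - C / 2 * t ^ 2) :=
    convexOn_of_hasDerivWithinAt2_nonneg hS (f' := fun t => f' t - C * t)
      (f'' := fun t => f'' t - C) (hf.sub (by fun_prop))
      (fun t ht => ((hf' t ht).sub (hsq t)).hasDerivWithinAt)
      (fun t ht => ((hf'' t ht).sub ((hasDerivAt_id t).const_mul C)).hasDerivWithinAt.congr_deriv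
        (by simp))
      (fun t ht => sub_nonneg.2 (hC t ht))
  have := hconvex.add_mul_sub_le_of_hasDerivAt (interior_subset hx) hy ((hf' x hx).sub (hsq x))
  linear_combination this

lemma sub_tangent_le_mul_sq_of_deriv2_le (hS : Convex ℝ S) (hf : ContinuousOn f S)
    (hf' : ∀ t ∈ interior S, HasDerivAt f (f' t) t)
    (hf'' : ∀ t ∈ interior S, HasDerivAt f' (f'' t) t) (hC : ∀ t ∈ interior S, f'' t ≤ C)
    (hx : x ∈ interior S) (hy : y ∈ S) :
    f y - f x - f' x * (y - x) ≤ C / 2 * (y - x) ^ 2 := by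
  have := mul_sq_le_sub_tangent_of_le_deriv2 (f := -f) (f' := -f') (f'' := -f'') (C := -C) hS
    hf.neg (fun t ht => (hf' t ht).neg) (fun t ht => (hf'' t ht).neg)
    (fun t ht => neg_le_neg (hC t ht)) hx hy
  simp only [Pi.neg_apply] at this
  linarith

end Taylor

lemma continuous_I0 : Continuous I0 :=
  continuous_const.mul (Real.continuous_mul_log.add
    (Real.continuous_mul_log.comp (continuous_const.sub continuous_id)))

lemma hasDerivAt_I0 {u : ℝ} (hu : u ∈ Ioo (0 : ℝ) 1) : HasDerivAt I0 (I0' u) u := by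
  have h1u : 1 - u ≠ 0 := by linarith [hu.2]
  have hlog := (Real.hasDerivAt_mul_log hu.1.ne').add
    ((Real.hasDerivAt_mul_log h1u).comp u ((hasDerivAt_id u).const_sub 1))
  refine (hlog.const_mul (1 / 2)).congr_deriv ?_
  rw [I0', Real.log_div hu.1.ne' h1u]
  ring

lemma hasDerivAt_I0' {u : ℝ} (hu : u ∈ Ioo (0 : ℝ) 1) :
    HasDerivAt I0' (1 / (2 * u * (1 - u))) u := by
  have hu0 : u ≠ 0 := hu.1.ne'
  have h1u : 1 - u ≠ 0 := by linarith [hu.2]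
  have hlog := (Real.hasDerivAt_log hu0).sub
    ((Real.hasDerivAt_log h1u).comp u ((hasDerivAt_id u).const_sub 1))
  refine ((hlog.const_mul (1 / 2)).congr_deriv ?_).congr_of_eventuallyEq ?_
  · field_simp
    ring
  · filter_upwards [Ioo_mem_nhds hu.1 hu.2] with v hv
    rw [I0', Real.log_div hv.1.ne' (by linarith [hv.2])]
    rfl

lemma two_le_one_div_two_mul_mul_one_sub {u : ℝ} (hu : u ∈ Ioo (0 : ℝ) 1) :
    2 ≤ 1 / (2 * u * (1 - u)) := by
  obtain ⟨h0, h1⟩ := hu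
  rw [le_div_iff₀ (by nlinarith)]
  nlinarith [sq_nonneg (2 * u - 1)]

section RateFunction

variable {e : ℝ}

lemma sq_le_I0_sub_tangent (he : e ∈ Ioo (0 : ℝ) 1) {u : ℝ} (hu : u ∈ Icc (0 : ℝ) 1) :
    (u - e) ^ 2 ≤ I0 u - I0 e - I0' e * (u - e) := by
  have := mul_sq_le_sub_tangent_of_le_deriv2 (convex_Icc 0 1) continuous_I0.continuousOn
    (fun t ht => hasDerivAt_I0 (by rwa [interior_Icc] at ht))
    (fun t ht => hasDerivAt_I0' (by rwa [interior_Icc] at ht))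
    (fun t ht => two_le_one_div_two_mul_mul_one_sub (by rwa [interior_Icc] at ht))
    (by rwa [interior_Icc]) hu
  linarith

lemma one_le_I0_quotient (he : e ∈ Ioo (0 : ℝ) 1) {x : ℝ} (hx : x ∈ Icc (-e) (1 - e))
    (hx0 : x ≠ 0) : 1 ≤ (I0 (e + x) - x * I0' e - I0 e) / x ^ 2 := by
  have := sq_le_I0_sub_tangent he (u := e + x) ⟨by linarith [hx.1], by linarith [hx.2]⟩
  rw [le_div_iff₀ (by positivity)]
  simp only [add_sub_cancel_left] at this
  linarith

lemma fminus_le_I0_quotient (he : e ∈ Ioo (0 : ℝ) 1) {x : ℝ} (hx : x ∈ Icc (-e) (1 - e))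
    (hx0 : x ≠ 0) : fminus e ≤ (I0 (e + x) - x * I0' e - I0 e) / x ^ 2 :=
  csInf_le ⟨1, by rintro r ⟨y, hy, hy0, rfl⟩; exact one_le_I0_quotient he hy hy0⟩ ⟨x, hx, hx0, rfl⟩

lemma one_le_fminus (he : e ∈ Ioo (0 : ℝ) 1) : 1 ≤ fminus e := by
  refine le_csInf ⟨_, 1 - e, ⟨by linarith [he.2], le_rfl⟩, by linarith [he.2], rfl⟩ ?_
  rintro r ⟨x, hx, hx0, rfl⟩
  exact one_le_I0_quotient he hx hx0

lemma fminus_mul_sq_le_I0_sub_tangent (he : e ∈ Ioo (0 : ℝ) 1) {u : ℝ}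
    (hu : u ∈ Icc (0 : ℝ) 1) : fminus e * (u - e) ^ 2 ≤ I0 u - I0 e - I0' e * (u - e) := by
  rcases eq_or_ne u e with rfl | hne
  · simp
  have hx0 : u - e ≠ 0 := sub_ne_zero.2 hne
  have := fminus_le_I0_quotient he (x := u - e) ⟨by linarith [hu.1], by linarith [hu.2]⟩ hx0
  rw [le_div_iff₀ (by positivity), add_sub_cancel] at this
  linarith

lemma fminus_le_one_div (he : e ∈ Ioo (0 : ℝ) 1) : fminus e ≤ 1 / (4 * e * (1 - e)) := by
  refine le_of_forall_pos_le_add fun ε hε => ?_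
  have hk : ContinuousAt (fun u : ℝ => 1 / (2 * u * (1 - u))) e :=
    continuousAt_const.div (by fun_prop) (by nlinarith [he.1, he.2])
  have hke : (fun u : ℝ => 1 / (2 * u * (1 - u))) e < 2 * (1 / (4 * e * (1 - e)) + ε) := by
    have : 1 / (2 * e * (1 - e)) = 2 * (1 / (4 * e * (1 - e))) := by field_simp; ring
    simp only [this]
    linarith
  obtain ⟨δ, hδ, hball⟩ := Metric.mem_nhds_iff.1 <|
    Filter.inter_mem (Ioo_mem_nhds he.1 he.2) (hk.eventually_lt_const hke)
  have hS : Metric.closedBall e (δ / 2) ⊆ Metric.ball e δ :=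
    Metric.closedBall_subset_ball (by linarith)
  have hy : e + δ / 2 ∈ Metric.closedBall e (δ / 2) := by simp [abs_of_pos hδ]
  have hy01 := (hball (hS hy)).1
  have hcenter : e ∈ interior (Metric.closedBall e (δ / 2)) := by
    rw [interior_closedBall e (half_pos hδ).ne']
    exact Metric.mem_ball_self (half_pos hδ)
  have htaylor := sub_tangent_le_mul_sq_of_deriv2_le (convex_closedBall e (δ / 2))
    continuous_I0.continuousOn
    (fun t ht => hasDerivAt_I0 (hball (hS (interior_subset ht))).1)
    (fun t ht => hasDerivAt_I0' (hball (hS (interior_subset ht))).1)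
    (fun t ht => (hball (hS (interior_subset ht))).2.le)
    hcenter hy
  have hq := fminus_le_I0_quotient he (x := δ / 2)
    ⟨by linarith [he.1], by linarith [hy01.2]⟩ (by positivity)
  rw [add_sub_cancel_left] at htaylor
  calc fminus e ≤ (I0 (e + δ / 2) - δ / 2 * I0' e - I0 e) / (δ / 2) ^ 2 := hq
    _ ≤ 1 / (4 * e * (1 - e)) + ε := by
      rw [div_le_iff₀ (by positivity)]
      linarith

end RateFunction

section Integration

variable {Ω : Type*} [MeasurableSpace Ω] {P : Measure Ω} {G : Ω → ℝ}

lemma Continuous.integrable_comp_of_ae_mem [IsFiniteMeasure P] {K : Set ℝ} (hK : IsCompact K)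
    {φ : ℝ → ℝ} (hφ : Continuous φ) (hG : AEStronglyMeasurable G P) (hGK : ∀ᵐ ω ∂P, G ω ∈ K) :
    Integrable (fun ω => φ (G ω)) P := by
  obtain ⟨C, hC⟩ := hK.exists_bound_of_continuousOn hφ.continuousOn
  exact .of_bound (hφ.comp_aestronglyMeasurable hG) C (hGK.mono fun ω hω => hC _ hω)

theorem fminus_mul_integral_sq_le [IsProbabilityMeasure P] {e : ℝ} (he : e ∈ Ioo (0 : ℝ) 1)
    (hG : AEStronglyMeasurable G P) (hG01 : ∀ᵐ ω ∂P, G ω ∈ Icc (0 : ℝ) 1)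
    (hmean : ∫ ω, G ω ∂P = e) :
    fminus e * ∫ ω, (G ω - e) ^ 2 ∂P ≤ ∫ ω, I0 (G ω) ∂P - I0 e := by
  have hint {φ : ℝ → ℝ} (hφ : Continuous φ) : Integrable (fun ω => φ (G ω)) P :=
    hφ.integrable_comp_of_ae_mem isCompact_Icc hG hG01
  have hI0 : Integrable (fun ω => I0 (G ω)) P := hint continuous_I0
  have hGi : Integrable G P := hint continuous_id
  have hlin : Integrable (fun ω => I0' e * (G ω - e)) P :=
    (hGi.sub (integrable_const e)).const_mul _
  have hdiff : Integrable (fun ω => I0 (G ω) - I0 e) P := hI0.sub (integrable_const _)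
  calc fminus e * ∫ ω, (G ω - e) ^ 2 ∂P
      = ∫ ω, fminus e * (G ω - e) ^ 2 ∂P := (integral_const_mul _ _).symm
    _ ≤ ∫ ω, I0 (G ω) - I0 e - I0' e * (G ω - e) ∂P :=
      integral_mono_ae (hint (φ := fun u => fminus e * (u - e) ^ 2) (by fun_prop))
        (hdiff.sub hlin) (hG01.mono fun ω hω => fminus_mul_sq_le_I0_sub_tangent he hω)
    _ = ∫ ω, I0 (G ω) ∂P - I0 e := by
      rw [integral_sub hdiff hlin, integral_const_mul, integral_sub hI0 (integrable_const _),
        integral_sub hGi (integrable_const _)]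
      simp [hmean]

end Integration

instance : IsProbabilityMeasure (volume.restrict (Icc (0 : ℝ) 1)) := ⟨by simp⟩

namespace IsGraphon

variable {g : ℝ → ℝ → ℝ}

lemma ae_mem_Icc (hg : IsGraphon g) :
    ∀ᵐ p ∂(volume.restrict (Icc (0 : ℝ) 1)).prod (volume.restrict (Icc (0 : ℝ) 1)),
      Function.uncurry g p ∈ Icc (0 : ℝ) 1 := by
  rw [Measure.prod_restrict, ae_restrict_iff' (measurableSet_Icc.prod measurableSet_Icc)]
  exact .of_forall fun p hp => hg.2.2 _ hp.1 _ hp.2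

lemma integral_comp_eq_integral_prod (hg : IsGraphon g) {φ : ℝ → ℝ} (hφ : Continuous φ) :
    ∫ x in Icc (0 : ℝ) 1, ∫ y in Icc (0 : ℝ) 1, φ (g x y) =
      ∫ p, φ (Function.uncurry g p)
        ∂(volume.restrict (Icc (0 : ℝ) 1)).prod (volume.restrict (Icc (0 : ℝ) 1)) :=
  (integral_prod _
    (hφ.integrable_comp_of_ae_mem isCompact_Icc hg.1.aestronglyMeasurable hg.ae_mem_Icc)).symm

end IsGraphon

/-- `f₋(e)` is positive, at most `I₀''(e)/2 = 1/(4e(1-e))`, and every graphon with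
edge density `e` satisfies `I(g) - I₀(e) ≥ f₋(e) ∫∫ (g - e)²`. -/
theorem rate_function_quadratic_bound (e : ℝ) (he : e ∈ Ioo (0:ℝ) 1) :
    0 < fminus e ∧ fminus e ≤ 1 / (4 * e * (1 - e)) ∧
    ∀ g : ℝ → ℝ → ℝ, IsGraphon g → edgeDensity g = e →
      rateFn g - I0 e ≥
        fminus e * ∫ x in Icc (0:ℝ) 1, ∫ y in Icc (0:ℝ) 1, (g x y - e) ^ 2 := by
  refine ⟨zero_lt_one.trans_le (one_le_fminus he), fminus_le_one_div he, fun g hg hdensity => ?_⟩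
  have hmean := hg.integral_comp_eq_integral_prod continuous_id
  rw [rateFn, hg.integral_comp_eq_integral_prod continuous_I0,
    hg.integral_comp_eq_integral_prod (φ := fun u => (u - e) ^ 2) (by fun_prop)]
  exact fminus_mul_integral_sq_le he hg.1.aestronglyMeasurable hg.ae_mem_Icc
    (hmean.symm.trans hdensity)
end

section
/- Every graphon g with edge density e = e(g) satisfies e³ - t(g) ≤ (∫_{[0,1]²} (g(x,y) - e)² dx dy)^{3/2}. -/
/-!
Write `g = e + f`, where `e` is the edge density, so that `∫∫ f = 0`. Expanding the product in
`t(g)` and using that the cyclic shift `(x, y, z) ↦ (y, z, x)` preserves the product measure,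
`t(g) = e³ + 3e ∫∫∫ f(x,y) f(y,z) + ∫∫∫ f(x,y) f(y,z) f(z,x)`. By symmetry of `f` the middle
integral is `∫ (∫ f(y,z) dz)² dy ≥ 0`. The last one is `∫∫ f(x,y) (f ∘ f)(y,x)`, where `f ∘ f` is
the composition of kernels; Cauchy–Schwarz, applied pointwise to `f ∘ f` and then on `[0,1]²`,
bounds its absolute value by `(∫∫ f²)^{3/2}`.
-/

open MeasureTheory Set

open Function

section General

variable {β : Type*} [MeasurableSpace β] {ν : Measure β}

theorem integral_mul_sq_le_sq_mul_sq {u v : β → ℝ} (hu : Integrable (fun p => u p ^ 2) ν)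
    (hv : Integrable (fun p => v p ^ 2) ν) (huv : Integrable (fun p => u p * v p) ν) :
    (∫ p, u p * v p ∂ν) ^ 2 ≤ (∫ p, u p ^ 2 ∂ν) * ∫ p, v p ^ 2 ∂ν := by
  have hquad (t : ℝ) : 0 ≤ (∫ p, v p ^ 2 ∂ν) * (t * t) + 2 * (∫ p, u p * v p ∂ν) * t
      + ∫ p, u p ^ 2 ∂ν := by
    have hexp : (fun p => (u p + t * v p) ^ 2)
        = fun p => u p ^ 2 + (2 * t * (u p * v p) + t * t * v p ^ 2) := by
      funext p; ring
    have hsq : 0 ≤ ∫ p, (u p + t * v p) ^ 2 ∂ν := integral_nonneg fun p => sq_nonneg _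
    rw [hexp, integral_add hu ?_, integral_add (huv.const_mul _) (hv.const_mul _),
      integral_const_mul, integral_const_mul] at hsq
    · linarith
    · exact (huv.const_mul _).add (hv.const_mul _)
  have := discrim_le_zero hquad
  rw [discrim] at this
  linarith

theorem integral_prod_prod {α γ E : Type*} [MeasurableSpace α] [MeasurableSpace γ]
    [NormedAddCommGroup E] [NormedSpace ℝ E] {μ : Measure α} {ρ : Measure γ} [SFinite μ]
    [SFinite ν] [SFinite ρ] {F : (α × β) × γ → E} (hF : Integrable F ((μ.prod ν).prod ρ)) :
    ∫ p, F p ∂(μ.prod ν).prod ρ = ∫ x, ∫ y, ∫ z, F ((x, y), z) ∂ρ ∂ν ∂μ := by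
  rw [integral_prod _ hF, integral_prod _ hF.integral_prod_left]

theorem integral_const_add_mul_const_add_mul_const_add [IsProbabilityMeasure ν] {a b c : β → ℝ}
    (ha : MemLp a ⊤ ν) (hb : MemLp b ⊤ ν) (hc : MemLp c ⊤ ν) (e : ℝ) :
    ∫ p, (e + a p) * (e + b p) * (e + c p) ∂ν =
      e ^ 3 + e ^ 2 * (∫ p, a p ∂ν + ∫ p, b p ∂ν + ∫ p, c p ∂ν)
        + e * (∫ p, a p * b p ∂ν + ∫ p, b p * c p ∂ν + ∫ p, c p * a p ∂ν)
        + ∫ p, a p * b p * c p ∂ν := by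
  have := ha.integrable le_top
  have := hb.integrable le_top
  have := hc.integrable le_top
  have := (hb.mul' ha).integrable le_top
  have := (hc.mul' hb).integrable le_top
  have := (ha.mul' hc).integrable le_top
  have := (hc.mul' (hb.mul' ha : MemLp (fun p => a p * b p) ⊤ ν)).integrable le_top
  have hexp : (fun p => (e + a p) * (e + b p) * (e + c p)) = fun p =>
      e ^ 3 + (e ^ 2 * (a p + b p + c p)
        + (e * (a p * b p + b p * c p + c p * a p) + a p * b p * c p)) := by
    funext p; ring
  rw [hexp, integral_add (by fun_prop) (by fun_prop), integral_add (by fun_prop) (by fun_prop),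
    integral_add (by fun_prop) (by fun_prop), integral_const_mul, integral_const_mul,
    integral_add (by fun_prop) (by fun_prop), integral_add (by fun_prop) (by fun_prop),
    integral_add (by fun_prop) (by fun_prop), integral_add (by fun_prop) (by fun_prop)]
  simp only [integral_const, probReal_univ, one_smul]
  ring

theorem MeasureTheory.MeasurePreserving.integral_const_add_mul_comp_mul_comp_comp
    [IsProbabilityMeasure ν] {σ : β ≃ᵐ β} (hσ : MeasurePreserving σ ν ν)
    (hσ3 : ∀ p, σ (σ (σ p)) = p) {a : β → ℝ} (ha : MemLp a ⊤ ν) (e : ℝ) :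
    ∫ p, (e + a p) * (e + a (σ p)) * (e + a (σ (σ p))) ∂ν =
      e ^ 3 + 3 * e ^ 2 * ∫ p, a p ∂ν + 3 * e * ∫ p, a p * a (σ p) ∂ν
        + ∫ p, a p * a (σ p) * a (σ (σ p)) ∂ν := by
  have hb : MemLp (fun p => a (σ p)) ⊤ ν := ha.comp_measurePreserving hσ
  have hrot (F : β → ℝ) : ∫ p, F (σ p) ∂ν = ∫ p, F p ∂ν := hσ.integral_comp' F
  have hc : MemLp (fun p => a (σ (σ p))) ⊤ ν := hb.comp_measurePreserving hσ
  rw [integral_const_add_mul_const_add_mul_const_add ha hb hc, hrot (fun p => a p),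
    hrot (fun p => a (σ p)), hrot (fun p => a p), hrot (fun p => a p * a (σ p)),
    ← hrot (fun p => a (σ (σ p)) * a p)]
  simp only [hσ3]
  ring

theorem integrable_of_norm_le [IsFiniteMeasure ν] {F : β → ℝ} {C : ℝ} (hF : Measurable F)
    (hC : ∀ p, ‖F p‖ ≤ C) : Integrable F ν :=
  .of_bound hF.aestronglyMeasurable C (.of_forall hC)

theorem norm_integral_le_of_forall_norm_le [IsProbabilityMeasure ν] {F : β → ℝ} {C : ℝ}
    (hC : ∀ p, ‖F p‖ ≤ C) : ‖∫ p, F p ∂ν‖ ≤ C := by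
  simpa using norm_integral_le_of_norm_le_const (μ := ν) (.of_forall hC)

theorem integrable_sq_of_norm_le [IsFiniteMeasure ν] {F : β → ℝ} {C : ℝ} (hF : Measurable F)
    (hC : ∀ p, ‖F p‖ ≤ C) : Integrable (fun p => F p ^ 2) ν :=
  integrable_of_norm_le (hF.pow_const 2) fun p => by
    rw [norm_pow]; exact pow_le_pow_left₀ (norm_nonneg _) (hC p) 2

end General

section Kernel

variable {α : Type*} [MeasurableSpace α] {μ : Measure α} [IsProbabilityMeasure μ]
  {f g : α → α → ℝ} {C D : ℝ}

noncomputable def kernelComp (μ : Measure α) (f g : α → α → ℝ) (x y : α) : ℝ :=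
  ∫ z, f x z * g z y ∂μ

theorem integral_sq_kernelComp_le (hf : Measurable (uncurry f)) (hC : ∀ x y, ‖f x y‖ ≤ C)
    (hg : Measurable (uncurry g)) (hD : ∀ x y, ‖g x y‖ ≤ D) :
    ∫ q, kernelComp μ f g q.1 q.2 ^ 2 ∂μ.prod μ ≤
      (∫ q, f q.1 q.2 ^ 2 ∂μ.prod μ) * ∫ q, g q.1 q.2 ^ 2 ∂μ.prod μ := by
  have hrow (x : α) : Integrable (fun z => f x z ^ 2) μ :=
    integrable_sq_of_norm_le (by fun_prop) (hC x)
  have hcol (y : α) : Integrable (fun z => g z y ^ 2) μ :=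
    integrable_sq_of_norm_le (by fun_prop) (hD · y)
  have hpt (q : α × α) : kernelComp μ f g q.1 q.2 ^ 2 ≤
      (∫ z, f q.1 z ^ 2 ∂μ) * ∫ z, g z q.2 ^ 2 ∂μ :=
    integral_mul_sq_le_sq_mul_sq (hrow q.1) (hcol q.2) (integrable_of_norm_le (by fun_prop)
      fun z => norm_mul_le_of_le (hC q.1 z) (hD z q.2))
  have hf2 : Integrable (fun q : α × α => f q.1 q.2 ^ 2) (μ.prod μ) :=
    integrable_sq_of_norm_le hf fun q => hC q.1 q.2
  have hg2 : Integrable (fun q : α × α => g q.1 q.2 ^ 2) (μ.prod μ) :=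
    integrable_sq_of_norm_le hg fun q => hD q.1 q.2
  calc ∫ q, kernelComp μ f g q.1 q.2 ^ 2 ∂μ.prod μ
      ≤ ∫ q, (∫ z, f q.1 z ^ 2 ∂μ) * ∫ z, g z q.2 ^ 2 ∂μ ∂μ.prod μ :=
        integral_mono_of_nonneg (.of_forall fun _ => sq_nonneg _)
          (hf2.integral_prod_left.mul_prod hg2.integral_prod_right) (.of_forall hpt)
    _ = (∫ q, f q.1 q.2 ^ 2 ∂μ.prod μ) * ∫ q, g q.1 q.2 ^ 2 ∂μ.prod μ := by
      rw [integral_prod_mul (fun x => ∫ z, f x z ^ 2 ∂μ) (fun y => ∫ z, g z y ^ 2 ∂μ),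
        integral_prod _ hf2, integral_prod_symm _ hg2]

theorem abs_integral_triangle_le (hf : Measurable (uncurry f)) (hC : ∀ x y, ‖f x y‖ ≤ C) :
    |∫ p, f p.1.1 p.1.2 * f p.1.2 p.2 * f p.2 p.1.1 ∂(μ.prod μ).prod μ| ≤
      (∫ q, f q.1 q.2 ^ 2 ∂μ.prod μ) ^ ((3 : ℝ) / 2) := by
  set S := ∫ q, f q.1 q.2 ^ 2 ∂μ.prod μ
  have hS : 0 ≤ S := integral_nonneg fun _ => sq_nonneg _
  have hK : Measurable fun q : α × α => kernelComp μ f f q.2 q.1 :=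
    ((by fun_prop : Measurable fun p : (α × α) × α => f p.1.2 p.2 * f p.2 p.1.1)
      |>.stronglyMeasurable.integral_prod_right'.measurable)
  have hKC (x y : α) : ‖kernelComp μ f f x y‖ ≤ C * C :=
    norm_integral_le_of_forall_norm_le fun z => norm_mul_le_of_le (hC x z) (hC z y)
  have hT : ∫ p, f p.1.1 p.1.2 * f p.1.2 p.2 * f p.2 p.1.1 ∂(μ.prod μ).prod μ =
      ∫ q, f q.1 q.2 * kernelComp μ f f q.2 q.1 ∂μ.prod μ := by
    rw [integral_prod _ (integrable_of_norm_le (by fun_prop) fun p =>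
      norm_mul_le_of_le (norm_mul_le_of_le (hC _ _) (hC _ _)) (hC _ _))]
    simp_rw [mul_assoc, integral_const_mul]
    rfl
  have hK2 : ∫ q, kernelComp μ f f q.2 q.1 ^ 2 ∂μ.prod μ ≤ S * S :=
    calc _ = ∫ q, kernelComp μ f f q.1 q.2 ^ 2 ∂μ.prod μ :=
          integral_prod_swap (fun q => kernelComp μ f f q.1 q.2 ^ 2)
      _ ≤ S * S := integral_sq_kernelComp_le hf hC hf hC
  have hsq : (∫ q, f q.1 q.2 * kernelComp μ f f q.2 q.1 ∂μ.prod μ) ^ 2 ≤ (S ^ ((3 : ℝ) / 2)) ^ 2 :=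
    calc _ ≤ S * ∫ q, kernelComp μ f f q.2 q.1 ^ 2 ∂μ.prod μ :=
          integral_mul_sq_le_sq_mul_sq (integrable_sq_of_norm_le hf fun q => hC q.1 q.2)
            (integrable_sq_of_norm_le hK fun q => hKC q.2 q.1)
            (integrable_of_norm_le (hf.mul hK) fun q => norm_mul_le_of_le (hC _ _) (hKC _ _))
      _ ≤ S * (S * S) := by gcongr
      _ = (S ^ ((3 : ℝ) / 2)) ^ 2 := by
          rw [← Real.rpow_natCast, ← Real.rpow_mul hS]; norm_num; ring
  rw [hT]
  exact abs_le_of_sq_le_sq hsq (by positivity)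

theorem integral_path_nonneg (hf : Measurable (uncurry f)) (hC : ∀ x y, ‖f x y‖ ≤ C)
    (hsymm : ∀ x y, f x y = f y x) :
    0 ≤ ∫ p, f p.1.1 p.1.2 * f p.1.2 p.2 ∂(μ.prod μ).prod μ := by
  have hr : Measurable fun y => ∫ z, f y z ∂μ :=
    hf.stronglyMeasurable.integral_prod_right'.measurable
  have hrC (y : α) : ‖∫ z, f y z ∂μ‖ ≤ C := norm_integral_le_of_forall_norm_le (hC y)
  rw [integral_prod _ (integrable_of_norm_le (by fun_prop) fun p =>
    norm_mul_le_of_le (hC _ _) (hC _ _))]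
  simp_rw [integral_const_mul]
  rw [integral_prod_symm _ (integrable_of_norm_le
    (F := fun q : α × α => f q.1 q.2 * ∫ z, f q.2 z ∂μ) (hf.mul (hr.comp measurable_snd))
    fun q => norm_mul_le_of_le (hC _ _) (hrC _))]
  simp_rw [integral_mul_const]
  refine integral_nonneg fun y => ?_
  simp_rw [hsymm _ y]
  exact mul_self_nonneg _

def rotateTriple : (α × α) × α ≃ᵐ (α × α) × α :=
  MeasurableEquiv.prodAssoc.trans MeasurableEquiv.prodComm

theorem rotateTriple_apply (p : (α × α) × α) : rotateTriple p = ((p.1.2, p.2), p.1.1) := rfl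

theorem measurePreserving_rotateTriple (μ : Measure α) [SFinite μ] :
    MeasurePreserving rotateTriple ((μ.prod μ).prod μ) ((μ.prod μ).prod μ) :=
  Measure.measurePreserving_swap.comp (measurePreserving_prodAssoc μ μ μ)

theorem integral_cube_sub_triangle_le {k : α → α → ℝ} (hk : Measurable (uncurry k))
    (hk0 : ∀ x y, 0 ≤ k x y) (hkC : ∀ x y, ‖k x y‖ ≤ C) (hsymm : ∀ x y, k x y = k y x) :
    (∫ x, ∫ y, k x y ∂μ ∂μ) ^ 3 - ∫ x, ∫ y, ∫ z, k x y * k y z * k z x ∂μ ∂μ ∂μ ≤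
      (∫ x, ∫ y, (k x y - ∫ x, ∫ y, k x y ∂μ ∂μ) ^ 2 ∂μ ∂μ) ^ ((3 : ℝ) / 2) := by
  set e := ∫ x, ∫ y, k x y ∂μ ∂μ
  set f : α → α → ℝ := fun x y => k x y - e
  have hf : Measurable (uncurry f) := hk.sub measurable_const
  have hfC (x y : α) : ‖f x y‖ ≤ C + ‖e‖ := (norm_sub_le _ _).trans (by gcongr; exact hkC x y)
  have he0 : 0 ≤ e := integral_nonneg fun x => integral_nonneg fun y => hk0 x y
  have ha : MemLp (fun p : (α × α) × α => f p.1.1 p.1.2) ⊤ ((μ.prod μ).prod μ) :=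
    memLp_top_of_bound (by fun_prop : Measurable _).aestronglyMeasurable _
      (.of_forall fun p => hfC _ _)
  have htri : ∫ x, ∫ y, ∫ z, k x y * k y z * k z x ∂μ ∂μ ∂μ = ∫ p, (e + f p.1.1 p.1.2) *
      (e + f (rotateTriple p).1.1 (rotateTriple p).1.2) *
      (e + f (rotateTriple (rotateTriple p)).1.1 (rotateTriple (rotateTriple p)).1.2)
        ∂(μ.prod μ).prod μ := by
    rw [← integral_prod_prod (F := fun p => k p.1.1 p.1.2 * k p.1.2 p.2 * k p.2 p.1.1)
      (integrable_of_norm_le (by fun_prop) fun p =>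
        norm_mul_le_of_le (norm_mul_le_of_le (hkC _ _) (hkC _ _)) (hkC _ _))]
    simp [f, rotateTriple_apply]
  have hmean : ∫ p, f p.1.1 p.1.2 ∂(μ.prod μ).prod μ = 0 := by
    have hkint : Integrable (fun q : α × α => k q.1 q.2) (μ.prod μ) :=
      integrable_of_norm_le hk fun q => hkC q.1 q.2
    rw [integral_fun_fst (fun q : α × α => f q.1 q.2), probReal_univ, one_smul,
      integral_sub hkint (integrable_const e), integral_const, probReal_univ, one_smul,
      integral_prod _ hkint, sub_self]
  have hS : ∫ x, ∫ y, (k x y - e) ^ 2 ∂μ ∂μ = ∫ q, f q.1 q.2 ^ 2 ∂μ.prod μ :=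
    (integral_prod _ (integrable_sq_of_norm_le hf fun q => hfC q.1 q.2)).symm
  rw [htri, (measurePreserving_rotateTriple μ).integral_const_add_mul_comp_mul_comp_comp
    (fun _ => rfl) ha e, hmean, hS]
  simp only [rotateTriple_apply]
  have hpath := mul_nonneg he0 <|
    integral_path_nonneg (μ := μ) hf hfC fun x y => by simp only [f, hsymm x y]
  have htriangle := (neg_le_abs _).trans (abs_integral_triangle_le (μ := μ) hf hfC)
  linarith

end Kernel

theorem setIntegral_Icc_eq_integral_unitInterval (F : ℝ → ℝ) :
    ∫ x in Icc (0 : ℝ) 1, F x = ∫ x : unitInterval, F x :=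
  (integral_subtype measurableSet_Icc F).symm

/-- Every graphon `g` with edge density `e` satisfies
`e³ - t(g) ≤ (∫∫ (g - e)²)^{3/2}`. -/
theorem triangle_density_lower_bound (g : ℝ → ℝ → ℝ) (hg : IsGraphon g) :
    (edgeDensity g) ^ 3 - triangleDensity g ≤
      (∫ x in Icc (0:ℝ) 1, ∫ y in Icc (0:ℝ) 1, (g x y - edgeDensity g) ^ 2)
        ^ ((3:ℝ)/2) := by
  obtain ⟨hmeas, hsymm, hbound⟩ := hg
  have hkernel := integral_cube_sub_triangle_le (μ := (volume : Measure unitInterval))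
    (k := fun x y => g x y) (C := 1)
    (hmeas.comp (measurable_subtype_coe.prodMap measurable_subtype_coe))
    (fun x y => (hbound x x.2 y y.2).1)
    (fun x y => (Real.norm_of_nonneg (hbound x x.2 y y.2).1).trans_le (hbound x x.2 y y.2).2)
    (fun x y => hsymm x x.2 y y.2)
  simp_rw [edgeDensity, triangleDensity, setIntegral_Icc_eq_integral_unitInterval]
  exact hkernel
end
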